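/- arXiv:2603.22141 — 4 statements merged into one kernel-verified Lean document; each statement's English description precedes it below -/
import Mathlib

section
/- Let φ: [0,2π] → ℝ be φ(θ) = min(θ/(2π), 1 − θ/(2π)), let r ∈ (0,1), N ≥ 1, and define f(θ) = (1/N + φ(θ))·r^{N φ(θ)}. Then for every nonzero integer m, the Fourier coefficient F_m = (1/2π)∫₀^{2π} f(θ) e^{−imθ} dθ satisfies |F_m| ≤ (2/(π² m²))·(1 + |log r|). -/
/-!
By the symmetry `φ(2π - θ) = φ(θ)`, the integral over `[0, 2π]` is twice the real part of the
integral over `[0, π]`, where `f(θ) = (a + bθ) e^{cθ}` with `a = 1/N`, `b = 1/(2π)` and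
`c = N log r / (2π) ≤ 0`. For `l = c - im` the integrand `(a + bθ) e^{lθ}` has the primitive
`e^{lθ} ((a + bθ)/l - b/l²)`, and `e^{lπ} = ±e^{cπ}` is real since `m` is an integer. So the real
part only involves `Re (1/l) = c/|l|²` and `|1/l²| = 1/|l|²`, and `|l|² ≥ m²`. The remaining factors
are bounded uniformly in `N` through `|c| e^{cπ} ≤ 1/(2π)` and `a |c| ≤ |log r|/(2π)`.
-/

/-- The tent function `φ(θ) = min(θ/(2π), 1 − θ/(2π))`. -/
noncomputable def tentφ (θ : ℝ) : ℝ := min (θ / (2 * Real.pi)) (1 - θ / (2 * Real.pi))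

open Complex ComplexConjugate Real intervalIntegral MeasureTheory

theorem integral_linear_mul_cexp {l : ℂ} (hl : l ≠ 0) (P Q : ℂ) (x y : ℝ) :
    ∫ t in x..y, (P + Q * t) * cexp (l * t) =
      cexp (l * y) * ((P + Q * y) / l - Q / l ^ 2) -
        cexp (l * x) * ((P + Q * x) / l - Q / l ^ 2) := by
  apply integral_eq_sub_of_hasDerivAt _ (Continuous.intervalIntegrable (by fun_prop) _ _)
  intro t _
  have hlin : HasDerivAt (fun t : ℝ ↦ (P + Q * t) / l - Q / l ^ 2) (Q / l) t := by
    simpa using ((((hasDerivAt_id t).ofReal_comp).const_mul Q).const_add P).div_const l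
      |>.sub_const (Q / l ^ 2)
  have hexp : HasDerivAt (fun t : ℝ ↦ cexp (l * t)) (cexp (l * t) * l) t := by
    simpa using (((hasDerivAt_id t).ofReal_comp).const_mul l).cexp
  refine (hexp.mul hlin).congr_deriv ?_
  field_simp
  ring

theorem abs_re_ofReal_div_add_ofReal_div_sq_le (w₁ w₂ : ℝ) (l : ℂ) :
    |((w₁ : ℂ) / l + w₂ / l ^ 2).re| ≤ (|w₁| * |l.re| + |w₂|) / normSq l := by
  have h₁ : |((w₁ : ℂ) / l).re| = |w₁| * |l.re| / normSq l := by
    rw [div_re, ofReal_re, ofReal_im, zero_mul, zero_div, add_zero, abs_div, abs_mul,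
      abs_of_nonneg (normSq_nonneg l)]
  have h₂ : |((w₂ : ℂ) / l ^ 2).re| ≤ |w₂| / normSq l := by
    refine (abs_re_le_norm _).trans_eq ?_
    rw [norm_div, norm_pow, ← normSq_eq_norm_sq, norm_real, Real.norm_eq_abs]
  rw [add_re, add_div]
  exact (abs_add_le _ _).trans (add_le_add h₁.le h₂)

theorem abs_re_integral_linear_mul_exp_le {u : ℝ → ℝ} {a b c : ℝ}
    (hu : Set.EqOn u (fun θ ↦ (a + b * θ) * rexp (c * θ)) (Set.uIcc 0 π)) {m : ℤ} (hm : m ≠ 0) :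
    |(∫ θ in (0:ℝ)..π, (u θ : ℂ) * cexp (-(I * m * θ))).re| ≤
      ((rexp (c * π) * |a + b * π| + |a|) * |c| + (1 + rexp (c * π)) * |b|) / m ^ 2 := by
  set l : ℂ := c - m * I
  have hl : l ≠ 0 := fun h ↦ hm (by simpa [l] using congrArg im h)
  set E : ℝ := rexp (c * π) * (-1) ^ m
  have hE : cexp (l * π) = E := by
    rw [show l * π = c * π + m * -(π * I) by ring, Complex.exp_add, exp_int_mul, exp_neg_pi_mul_I]
    simp [E]
  have hJ : ∫ θ in (0:ℝ)..π, (u θ : ℂ) * cexp (-(I * m * θ)) =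
      ((E * (a + b * π) - a : ℝ) : ℂ) / l + ((1 - E) * b : ℝ) / l ^ 2 := by
    rw [integral_congr (g := fun θ : ℝ ↦ ((a : ℂ) + b * θ) * cexp (l * θ)) fun θ hθ ↦ ?_]
    · simp only [integral_linear_mul_cexp hl, hE]
      push_cast
      field_simp
      rw [mul_zero, Complex.exp_zero]
      ring
    · rw [hu hθ, ofReal_mul, mul_assoc, ofReal_exp, ← Complex.exp_add,
        show ((c * θ : ℝ) : ℂ) + -(I * m * θ) = l * θ by simp only [l]; push_cast; ring]
      push_cast
      ring
  have hEabs : |E| = rexp (c * π) := by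
    rw [abs_mul, abs_neg_one_zpow, mul_one, abs_of_pos (exp_pos _)]
  have hw₁ : |E * (a + b * π) - a| ≤ rexp (c * π) * |a + b * π| + |a| := by
    rw [← hEabs, ← abs_mul]
    exact abs_sub _ _
  have hw₂ : |(1 - E) * b| ≤ (1 + rexp (c * π)) * |b| := by
    rw [abs_mul]
    gcongr
    exact (abs_sub 1 E).trans_eq (by rw [abs_one, hEabs])
  have hnormSq : (m : ℝ) ^ 2 ≤ normSq l := by
    simp [l, normSq_apply]
    nlinarith [sq_nonneg c]
  have hlre : l.re = c := by simp [l]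
  rw [hJ]
  refine (abs_re_ofReal_div_add_ofReal_div_sq_le _ _ l).trans ?_
  rw [hlre]
  exact div_le_div₀ (by positivity) (by gcongr) (by positivity) hnormSq

theorem integral_mul_cexp_eq_two_re_of_symm {f : ℝ → ℝ}
    (hf : IntervalIntegrable f volume 0 (2 * π)) (hsymm : ∀ θ, f (2 * π - θ) = f θ) (m : ℤ) :
    ∫ θ in (0:ℝ)..2 * π, (f θ : ℂ) * cexp (-(I * m * θ)) =
      ↑(2 * (∫ θ in (0:ℝ)..π, (f θ : ℂ) * cexp (-(I * m * θ))).re) := by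
  set g : ℝ → ℂ := fun θ ↦ (f θ : ℂ) * cexp (-(I * m * θ))
  have hg : IntervalIntegrable g volume 0 (2 * π) :=
    (show IntervalIntegrable (fun θ ↦ (f θ : ℂ)) volume 0 (2 * π) from
      ⟨hf.1.ofReal, hf.2.ofReal⟩).mul_continuousOn (by fun_prop)
  have hreflect (θ : ℝ) : g (2 * π - θ) = conj (g θ) := by
    have : -(I * m * ↑(2 * π - θ)) = (-m : ℤ) * (2 * π * I) + conj (-(I * m * θ)) := by
      simp only [map_neg, map_mul, conj_I, conj_ofReal, map_intCast]
      push_cast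
      ring
    simp only [g, hsymm, this, Complex.exp_add, exp_int_mul_two_pi_mul_I, one_mul, ← exp_conj,
      map_mul, conj_ofReal]
  have hsecond : ∫ θ in π..2 * π, g θ = conj (∫ θ in (0:ℝ)..π, g θ) := by
    have := integral_comp_sub_left g (2 * π) (a := 0) (b := π)
    rw [show 2 * π - π = π by ring, sub_zero] at this
    rw [← this, integral_of_le pi_pos.le, integral_of_le pi_pos.le, ← integral_conj]
    simp only [hreflect]
  have hπ : π ∈ Set.uIcc 0 (2 * π) := by
    rw [Set.uIcc_of_le (by positivity)]
    constructor <;> linarith [pi_pos]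
  rw [← integral_add_adjacent_intervals (hg.mono_set (Set.uIcc_subset_uIcc_left hπ))
    (hg.mono_set (Set.uIcc_subset_uIcc_right hπ)), hsecond, add_conj]

theorem mul_exp_neg_mul_pi_le (s : ℝ) : s * rexp (-(s * π)) * π ≤ 1 / 2 := by
  have := mul_exp_neg_le_exp_neg_one (s * π)
  linarith [exp_neg_one_lt_half]

theorem linear_exp_coeff_bound_mul_pi_le {a c : ℝ} (ha₀ : 0 ≤ a) (ha₁ : a ≤ 1) (hc : c ≤ 0) :
    ((rexp (c * π) * |a + 1 / (2 * π) * π| + |a|) * |c| + (1 + rexp (c * π)) * |1 / (2 * π)|) * π ≤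
      2 + a * |c| * π := by
  have hexp : rexp (c * π) ≤ 1 := exp_le_one_iff.2 (mul_nonpos_of_nonpos_of_nonneg hc pi_pos.le)
  have hdecay : rexp (c * π) * |c| * π * (a + 1 / 2) ≤ 1 / 2 * (3 / 2) := by
    refine mul_le_mul ?_ (by linarith) (by positivity) (by norm_num)
    simpa [abs_of_nonpos hc, mul_comm] using mul_exp_neg_mul_pi_le (-c)
  have hsplit : ((rexp (c * π) * |a + 1 / (2 * π) * π| + |a|) * |c| +
      (1 + rexp (c * π)) * |1 / (2 * π)|) * π =
        rexp (c * π) * |c| * π * (a + 1 / 2) + a * |c| * π + (1 + rexp (c * π)) / 2 := by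
    rw [abs_of_nonneg ha₀, abs_of_pos (by positivity : 0 < 1 / (2 * π)),
      abs_of_pos (by positivity : 0 < a + 1 / (2 * π) * π)]
    field_simp
  linarith

theorem continuous_tentφ : Continuous tentφ := by
  unfold tentφ
  fun_prop

theorem tentφ_two_pi_sub (θ : ℝ) : tentφ (2 * π - θ) = tentφ θ := by
  have : (2 * π - θ) / (2 * π) = 1 - θ / (2 * π) := by field_simp
  rw [tentφ, tentφ, this, sub_sub_cancel, min_comm]

theorem tentφ_of_le_pi {θ : ℝ} (hθ : θ ≤ π) : tentφ θ = θ / (2 * π) := by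
  refine min_eq_left ?_
  rw [div_le_iff₀ (by positivity), sub_mul, div_mul_cancel₀ _ (by positivity)]
  linarith

theorem continuous_tent_rpow {r : ℝ} (hr : 0 < r) (N : ℕ) :
    Continuous fun θ ↦ (1 / N + tentφ θ) * r ^ ((N : ℝ) * tentφ θ) :=
  (continuous_const.add continuous_tentφ).mul
    (continuous_const.rpow (continuous_const.mul continuous_tentφ) fun _ ↦ Or.inl hr.ne')

theorem tent_rpow_eqOn {r : ℝ} (hr : 0 < r) (N : ℕ) :
    Set.EqOn (fun θ ↦ (1 / N + tentφ θ) * r ^ ((N : ℝ) * tentφ θ))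
      (fun θ ↦ (1 / N + 1 / (2 * π) * θ) * rexp (N * Real.log r / (2 * π) * θ)) (Set.uIcc 0 π) := by
  intro θ hθ
  rw [Set.uIcc_of_le pi_pos.le] at hθ
  simp only [tentφ_of_le_pi hθ.2, rpow_def_of_pos hr]
  ring_nf

theorem abs_re_integral_tent_rpow_mul_pi_le (N : ℕ) {r : ℝ} (hr₀ : 0 < r) (hr₁ : r < 1) {m : ℤ}
    (hm : m ≠ 0) :
    |(∫ θ in (0:ℝ)..π, (((1 / N + tentφ θ) * r ^ ((N : ℝ) * tentφ θ) : ℝ) : ℂ) *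
      cexp (-(I * m * θ))).re| * π ≤ 2 * (1 + |Real.log r|) / m ^ 2 := by
  set c : ℝ := N * Real.log r / (2 * π)
  have hc : c ≤ 0 := div_nonpos_of_nonpos_of_nonneg
    (mul_nonpos_of_nonneg_of_nonpos N.cast_nonneg (Real.log_neg hr₀ hr₁).le) (by positivity)
  have hac : 1 / N * |c| * π ≤ |Real.log r| / 2 := by
    rcases N.eq_zero_or_pos with rfl | hN
    · simp [c]
      positivity
    · simp only [c, abs_div, abs_mul, Nat.abs_cast, abs_of_pos two_pi_pos]
      field_simp
      rfl
  have hB := linear_exp_coeff_bound_mul_pi_le (a := 1 / N) (by positivity)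
    (by simpa using N.cast_inv_le_one (α := ℝ)) hc
  calc _ ≤ _ / m ^ 2 * π :=
        mul_le_mul_of_nonneg_right (abs_re_integral_linear_mul_exp_le (tent_rpow_eqOn hr₀ N) hm)
          pi_pos.le
    _ ≤ 2 * (1 + |Real.log r|) / m ^ 2 := by
        rw [div_mul_eq_mul_div]
        exact div_le_div_of_nonneg_right (by linarith [abs_nonneg (Real.log r)]) (by positivity)

theorem fourierCoeff_tent_bound_general (N : ℕ) (r : ℝ) (hr0 : 0 < r) (hr1 : r < 1)
    (m : ℤ) (hm : m ≠ 0) :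
    ‖(1 / (2 * Real.pi) : ℝ) •
        ∫ θ in (0:ℝ)..(2 * Real.pi),
          (↑(((1 / N : ℝ) + tentφ θ) * r ^ ((N : ℝ) * tentφ θ)) : ℂ) *
            Complex.exp (-(Complex.I * (m : ℂ) * (θ : ℂ)))‖ ≤
      2 / (Real.pi ^ 2 * (m : ℝ) ^ 2) * (1 + |Real.log r|) := by
  rw [integral_mul_cexp_eq_two_re_of_symm ((continuous_tent_rpow hr0 N).intervalIntegrable _ _)
    (fun θ ↦ by simp only [tentφ_two_pi_sub]), real_smul, ← ofReal_mul, norm_real,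
    Real.norm_eq_abs, abs_mul, abs_mul, abs_of_pos (by positivity : (0:ℝ) < 1 / (2 * π)), abs_two]
  refine le_of_eq_of_le ?_ ((div_le_div_of_nonneg_right
    (abs_re_integral_tent_rpow_mul_pi_le N hr0 hr1 hm) (sq_nonneg π)).trans_eq ?_)
  · field_simp
  · ring

/-- For `f(θ) = (1/N + φ(θ)) r^{N φ(θ)}` with `r ∈ (0,1)` and `N ≥ 1`, every Fourier
coefficient `F_m = (1/2π) ∫₀^{2π} f(θ) e^{−imθ} dθ` with `m ≠ 0` satisfies
`|F_m| ≤ (2/(π² m²)) (1 + |log r|)`. -/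
theorem fourierCoeff_tent_bound (N : ℕ) (hN : 1 ≤ N) (r : ℝ) (hr0 : 0 < r) (hr1 : r < 1)
    (m : ℤ) (hm : m ≠ 0) :
    ‖(1 / (2 * Real.pi) : ℝ) •
        ∫ θ in (0:ℝ)..(2 * Real.pi),
          (↑(((1 / N : ℝ) + tentφ θ) * r ^ ((N : ℝ) * tentφ θ)) : ℂ) *
            Complex.exp (-(Complex.I * (m : ℂ) * (θ : ℂ)))‖ ≤
      2 / (Real.pi ^ 2 * (m : ℝ) ^ 2) * (1 + |Real.log r|) :=
  fourierCoeff_tent_bound_general N r hr0 hr1 m hm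
end

section
/- Let n: ℝ → ℝ be L-Lipschitz and 2π-periodic, sampled at q_j = 2πj/N for j = −N/2,…,N/2−1, and let ñ(s) = (1/N)Σ_j e^{−i q_j s} n(q_j) be its discrete Fourier transform. Then Σ_{s=1}^{N−1} sin²(πs/N)·|ñ(s)|² ≤ π²L²/N². -/
/-!
Sample `n` on `ZMod N`. The DFT of the forward difference of the samples is `(e^{2πis/N} - 1)`
times their DFT, and `|e^{2πis/N} - 1| = 2 |sin (πs/N)|`, so the weighted sum is `1/(4N²)` times
the squared ℓ²-norm of the DFT of the differences. By Parseval this is `N` times the squared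
ℓ²-norm of the differences, each of which is at most `2πL/N` by the Lipschitz bound.
-/

open scoped Real
open Finset ComplexConjugate

namespace ZMod

variable {N : ℕ} [NeZero N]

lemma sum_Ico_intCast {M : Type*} [AddCommMonoid M] (a : ℤ) (f : ZMod N → M) :
    ∑ j ∈ Ico a (a + N), f j = ∑ x, f x := by
  refine sum_nbij' (↑) (fun x ↦ a + ((x - (a : ZMod N)).val : ℤ)) (by simp) (fun x _ ↦ ?_)
    (fun j hj ↦ ?_) (fun x _ ↦ by simp) (fun _ _ ↦ rfl)
  · have := val_lt (x - (a : ZMod N))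
    rw [mem_Ico]
    omega
  · rw [mem_Ico] at hj
    rw [← Int.cast_sub, val_intCast, Int.emod_eq_of_lt (by omega) (by omega), add_sub_cancel]

lemma sum_range_natCast {M : Type*} [AddCommMonoid M] (f : ZMod N → M) :
    ∑ s ∈ range N, f s = ∑ x, f x :=
  sum_nbij' (↑) val (by simp) (fun x _ ↦ by simpa using val_lt x)
    (fun s hs ↦ val_cast_of_lt (mem_range.1 hs)) (fun x _ ↦ natCast_zmod_val x) (fun _ _ ↦ rfl)

variable {E : Type*} [AddCommGroup E] [Module ℂ E]

lemma dft_comp_add_right (Φ : ZMod N → E) (a k : ZMod N) :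
    𝓕 (fun j ↦ Φ (j + a)) k = stdAddChar (a * k) • 𝓕 Φ k := by
  simp only [dft_apply, smul_sum, smul_smul, ← AddChar.map_add_eq_mul]
  exact Fintype.sum_equiv (Equiv.addRight a) _ _ fun j ↦ by simp only [Equiv.coe_addRight]; ring_nf

lemma dft_fwdDiff (Φ : ZMod N → E) (k : ZMod N) :
    𝓕 (fwdDiff 1 Φ) k = (stdAddChar k - 1) • 𝓕 Φ k := by
  have : fwdDiff 1 Φ = (fun j ↦ Φ (j + 1)) - Φ := rfl
  rw [this, map_sub, Pi.sub_apply, dft_comp_add_right, one_mul, sub_smul, one_smul]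

lemma sum_norm_dft_sq (Φ : ZMod N → ℂ) : ∑ k, ‖𝓕 Φ k‖ ^ 2 = N * ∑ j, ‖Φ j‖ ^ 2 := by
  have key (k : ZMod N) : (‖𝓕 Φ k‖ ^ 2 : ℂ) =
      ∑ j, ∑ l, Φ j * conj (Φ l) * stdAddChar ((l - j) * k) := by
    rw [← Complex.mul_conj', dft_apply, map_sum, sum_mul_sum]
    refine sum_congr rfl fun j _ ↦ sum_congr rfl fun l _ ↦ ?_
    simp only [smul_eq_mul, map_mul, ← AddChar.map_neg_eq_conj]
    rw [sub_mul, sub_eq_add_neg, AddChar.map_add_eq_mul]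
    ring_nf
  have orth (t : ZMod N) : ∑ k, stdAddChar (t * k) = if t = 0 then (N : ℂ) else 0 := by
    split_ifs with h
    · simp [h]
    · exact AddChar.sum_eq_zero_of_ne_one (isPrimitive_stdAddChar N h)
  apply Complex.ofReal_injective
  push_cast
  calc ∑ k, (‖𝓕 Φ k‖ ^ 2 : ℂ)
      = ∑ j, ∑ l, Φ j * conj (Φ l) * ∑ k, stdAddChar ((l - j) * k) := by
        simp only [key, mul_sum]
        rw [sum_comm]
        exact sum_congr rfl fun j _ ↦ sum_comm
    _ = ∑ j, Φ j * conj (Φ j) * N := by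
        simp only [orth, sub_eq_zero, mul_ite, mul_zero, sum_ite_eq', mem_univ, if_true]
    _ = N * ∑ j, (‖Φ j‖ ^ 2 : ℂ) := by
        simp only [Complex.mul_conj', mul_sum, mul_comm]

lemma norm_stdAddChar_natCast_sub_one_sq (s : ℕ) :
    ‖stdAddChar (s : ZMod N) - 1‖ ^ 2 = 4 * Real.sin (π * s / N) ^ 2 := by
  have : stdAddChar (s : ZMod N) = Complex.exp (Complex.I * ↑(2 * π * s / N)) := by
    rw [← Int.cast_natCast, stdAddChar_coe]; push_cast; ring_nf
  rw [this, Complex.norm_exp_I_mul_ofReal_sub_one, Real.norm_eq_abs, sq_abs]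
  ring_nf

end ZMod

noncomputable def periodicSample (N : ℕ) (n : ℝ → ℝ) (j : ZMod N) : ℂ := n (2 * π * j.val / N)

section periodicSample

variable {N : ℕ} [NeZero N] {n : ℝ → ℝ}

lemma periodicSample_intCast (hper : Function.Periodic n (2 * π)) (j : ℤ) :
    periodicSample N n j = n (2 * π * j / N) := by
  have hN : (N : ℝ) ≠ 0 := NeZero.ne _
  have hj : 2 * π * j / N = 2 * π * ((j % N : ℤ) : ℝ) / N + (j / N : ℤ) * (2 * π) := by
    rw [Int.emod_def]
    push_cast
    field_simp
    ring
  rw [periodicSample, hj, hper.int_mul, ← ZMod.val_intCast, Int.cast_natCast]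

lemma norm_fwdDiff_periodicSample_le {L : ℝ} (hlip : ∀ x y, |n x - n y| ≤ L * |x - y|)
    (hper : Function.Periodic n (2 * π)) (j : ZMod N) :
    ‖fwdDiff 1 (periodicSample N n) j‖ ≤ 2 * π * L / N := by
  obtain ⟨m, rfl⟩ := ZMod.intCast_surjective j
  have hN : (0 : ℝ) < N := Nat.cast_pos.2 (Nat.pos_of_neZero N)
  have hstep : 2 * π * ((m + 1 : ℤ) : ℝ) / N - 2 * π * m / N = 2 * π / N := by
    push_cast
    ring
  rw [fwdDiff, show (m : ZMod N) + 1 = ((m + 1 : ℤ) : ZMod N) by push_cast; rfl,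
    periodicSample_intCast hper, periodicSample_intCast hper,
    ← Complex.ofReal_sub, Complex.norm_real, Real.norm_eq_abs]
  calc |n _ - n _| ≤ L * |2 * π * ((m + 1 : ℤ) : ℝ) / N - 2 * π * m / N| := hlip _ _
    _ = 2 * π * L / N := by rw [hstep, abs_of_pos (by positivity)]; ring

lemma sum_Icc_exp_mul_eq_dft (hper : Function.Periodic n (2 * π)) (s : ℕ) :
    ∑ j ∈ Finset.Icc (-(N : ℤ) / 2) ((N : ℤ) / 2 - 1),
        Complex.exp (-(Complex.I * (2 * π * j / N : ℝ) * (s : ℂ))) * (n (2 * π * j / N) : ℂ) =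
      ZMod.dft (periodicSample N n) s := by
  -- `-N / 2` rounds down, so this window consists of `N` consecutive integers.
  have hIcc : Icc (-(N : ℤ) / 2) ((N : ℤ) / 2 - 1) = Ico (-(N : ℤ) / 2) (-(N : ℤ) / 2 + N) := by
    ext j
    simp only [mem_Icc, mem_Ico]
    omega
  rw [hIcc, ZMod.dft_apply, ← ZMod.sum_Ico_intCast (-(N : ℤ) / 2)]
  refine sum_congr rfl fun j _ ↦ ?_
  rw [periodicSample_intCast hper, smul_eq_mul,
    show -((j : ZMod N) * s) = ((-(j * s) : ℤ) : ZMod N) by push_cast; rfl, ZMod.stdAddChar_coe]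
  push_cast
  ring_nf

end periodicSample

theorem dft_lipschitz_bound_general (N : ℕ) (hN0 : 0 < N) (L : ℝ)
    (n : ℝ → ℝ)
    (hlip : ∀ x y : ℝ, |n x - n y| ≤ L * |x - y|)
    (hper : Function.Periodic n (2 * π)) :
    ∑ s ∈ Finset.Ico 1 N,
        Real.sin (π * s / N) ^ 2 *
          ‖(1 / (N : ℂ)) *
            ∑ j ∈ Finset.Icc (-(N : ℤ) / 2) ((N : ℤ) / 2 - 1),
              Complex.exp (-(Complex.I * (2 * π * j / N : ℝ) * (s : ℂ))) *
                (n (2 * π * j / N) : ℂ)‖ ^ 2 ≤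
      π ^ 2 * L ^ 2 / (N : ℝ) ^ 2 := by
  have : NeZero N := ⟨hN0.ne'⟩
  have hN : (0 : ℝ) < N := Nat.cast_pos.2 hN0
  set Φ := periodicSample N n
  set g : ZMod N → ℝ := fun k ↦ ‖ZMod.dft (fwdDiff 1 Φ) k‖ ^ 2 / (4 * N ^ 2)
  have hterm (s : ℕ) : Real.sin (π * s / N) ^ 2 * ‖(1 / (N : ℂ)) * ZMod.dft Φ s‖ ^ 2 = g s := by
    simp only [g, ZMod.dft_fwdDiff, norm_smul, mul_pow, ZMod.norm_stdAddChar_natCast_sub_one_sq,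
      norm_mul, norm_div, norm_one, Complex.norm_natCast]
    field_simp
  calc _ = ∑ s ∈ Ico 1 N, g s := sum_congr rfl fun s _ ↦ by rw [sum_Icc_exp_mul_eq_dft hper, hterm]
    _ ≤ ∑ s ∈ range N, g s :=
        sum_le_sum_of_subset_of_nonneg (range_eq_Ico N ▸ Ico_subset_Ico_left zero_le_one)
          fun _ _ _ ↦ by positivity
    _ = N * ∑ j, ‖fwdDiff 1 Φ j‖ ^ 2 / (4 * N ^ 2) := by
        rw [ZMod.sum_range_natCast, ← sum_div, ZMod.sum_norm_dft_sq, mul_div_assoc, sum_div]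
    _ ≤ N * ∑ _j : ZMod N, (2 * π * L / N) ^ 2 / (4 * N ^ 2) := by
        gcongr with j
        exact norm_fwdDiff_periodicSample_le hlip hper j
    _ = π ^ 2 * L ^ 2 / N ^ 2 := by
        rw [sum_const, card_univ, ZMod.card, nsmul_eq_mul]
        field_simp
        ring

/-- Parseval-type bound for the discrete Fourier transform of a Lipschitz periodic
function: if `n` is `L`-Lipschitz and `2π`-periodic, sampled at `q_j = 2πj/N` for
`j = −N/2, …, N/2 − 1`, and `ñ(s) = (1/N) ∑_j e^{−i q_j s} n(q_j)`, then
`∑_{s=1}^{N−1} sin²(πs/N) |ñ(s)|² ≤ π² L² / N²`. -/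
theorem dft_lipschitz_bound (N : ℕ) (hN : Even N) (hN0 : 0 < N) (L : ℝ) (hL : 0 ≤ L)
    (n : ℝ → ℝ)
    (hlip : ∀ x y : ℝ, |n x - n y| ≤ L * |x - y|)
    (hper : Function.Periodic n (2 * π)) :
    ∑ s ∈ Finset.Ico 1 N,
        Real.sin (π * s / N) ^ 2 *
          ‖(1 / (N : ℂ)) *
            ∑ j ∈ Finset.Icc (-(N : ℤ) / 2) ((N : ℤ) / 2 - 1),
              Complex.exp (-(Complex.I * (2 * π * j / N : ℝ) * (s : ℂ))) *
                (n (2 * π * j / N) : ℂ)‖ ^ 2 ≤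
      π ^ 2 * L ^ 2 / (N : ℝ) ^ 2 :=
  dft_lipschitz_bound_general N hN0 L n hlip hper
end

section
/- For even N ≥ 2 and r ∈ [0,1), Σ_{s=1}^{N−1} (1 − r^{1+d(s,0)})² / sin²(πs/N) ≤ (N²/2)·(ζ(2) − 2r·Li₂(r) + r²·Li₂(r²)), where d(s,0) = min(s, N−s). -/
/-!
Jordan's inequality `sin x ≥ 2x/π` on `[0, π/2]`, applied at the cyclic distance
`d = min s (N - s)` (note `sin (π s / N) = sin (π d / N)`), bounds the `s`-th term by
`(N²/4) (1 - r^(1+d))² / d²`. Each `d` comes from at most two values of `s`, and the resulting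
nonnegative sum is dominated by the full series `∑_{m ≥ 1} (1 - r^(1+m))² / m²`, which expands
into `ζ(2) - 2r Li₂(r) + r² Li₂(r²)`.
-/

open Real Finset

theorem two_mul_div_le_sin_pi_mul_div {x y : ℝ} (hx : 0 ≤ x) (hxy : 2 * x ≤ y) :
    2 * x / y ≤ sin (π * x / y) := by
  rcases (by linarith : (0 : ℝ) ≤ y).eq_or_lt with rfl | hy
  · simp [show x = 0 by linarith]
  have hle : π * x / y ≤ π / 2 := by
    rw [div_le_div_iff₀ hy two_pos]; nlinarith [pi_pos]
  calc 2 * x / y = 2 / π * (π * x / y) := by field_simp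
    _ ≤ sin (π * x / y) := mul_le_sin (by positivity) hle

theorem sin_pi_mul_sub_div {x y : ℝ} (hy : y ≠ 0) : sin (π * (y - x) / y) = sin (π * x / y) := by
  rw [← sin_pi_sub]; congr 1; field_simp; ring

theorem two_mul_min_div_le_sin {s N : ℕ} (hsN : s ≤ N) :
    2 * (min s (N - s) : ℕ) / (N : ℝ) ≤ sin (π * s / N) := by
  rcases le_total s (N - s) with h | h
  · rw [min_eq_left h]
    exact two_mul_div_le_sin_pi_mul_div s.cast_nonneg (by exact_mod_cast (by omega : 2 * s ≤ N))
  · rcases N.eq_zero_or_pos with rfl | hN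
    · simp
    rw [min_eq_right h, ← sin_pi_mul_sub_div (x := (s : ℝ)) (y := N) (by positivity),
      ← Nat.cast_sub hsN]
    exact two_mul_div_le_sin_pi_mul_div (Nat.cast_nonneg _)
      (by exact_mod_cast (by omega : 2 * (N - s) ≤ N))

theorem sq_div_sin_pi_mul_div_sq_le (c : ℝ) {s N : ℕ} (hs : 0 < s) (hsN : s < N) :
    c ^ 2 / sin (π * s / N) ^ 2 ≤ (N : ℝ) ^ 2 / 4 * (c ^ 2 / (min s (N - s) : ℕ) ^ 2) := by
  have hmin : (0 : ℝ) < (min s (N - s) : ℕ) := by exact_mod_cast (by omega : 0 < min s (N - s))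
  have hN : (0 : ℝ) < N := by exact_mod_cast (by omega : 0 < N)
  calc c ^ 2 / sin (π * s / N) ^ 2 ≤ c ^ 2 / (2 * (min s (N - s) : ℕ) / (N : ℝ)) ^ 2 := by
        gcongr
        exact two_mul_min_div_le_sin hsN.le
    _ = (N : ℝ) ^ 2 / 4 * (c ^ 2 / (min s (N - s) : ℕ) ^ 2) := by field_simp; ring

theorem sum_Ico_comp_min_sub_le {f : ℕ → ℝ} (hf : ∀ n, 0 ≤ f n) (N : ℕ) :
    ∑ s ∈ Ico 1 N, f (min s (N - s)) ≤ 2 * ∑ s ∈ Ico 1 N, f s := by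
  have hreflect : ∑ s ∈ Ico 1 N, f (N - s) = ∑ s ∈ Ico 1 N, f s := by
    rcases N.eq_zero_or_pos with rfl | hN
    · simp
    rw [sum_Ico_reflect f 1 (by omega : N ≤ N + 1), Nat.add_sub_cancel, Nat.add_sub_cancel_left]
  calc ∑ s ∈ Ico 1 N, f (min s (N - s)) ≤ ∑ s ∈ Ico 1 N, (f s + f (N - s)) := by
        gcongr with s
        rcases min_choice s (N - s) with h | h <;> rw [h] <;> linarith [hf s, hf (N - s)]
    _ = 2 * ∑ s ∈ Ico 1 N, f s := by rw [sum_add_distrib, hreflect, two_mul]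

theorem sum_Ico_one_le_tsum_succ {f : ℕ → ℝ} (hf : ∀ n, 0 ≤ f n)
    (hsum : Summable fun n ↦ f (n + 1)) (N : ℕ) :
    ∑ s ∈ Ico 1 N, f s ≤ ∑' n, f (n + 1) := by
  rw [sum_Ico_eq_sum_range]
  simp_rw [add_comm 1]
  exact hsum.sum_le_tsum _ fun n _ ↦ hf _

theorem summable_pow_succ_div_sq {x : ℝ} (hx : |x| ≤ 1) :
    Summable fun m : ℕ ↦ x ^ (m + 1) / ((m + 1 : ℝ)) ^ 2 := by
  have h := (summable_nat_add_iff 1).mpr (Real.summable_one_div_nat_pow.mpr one_lt_two)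
  refine Summable.of_norm_bounded (g := fun m : ℕ ↦ 1 / ((m + 1 : ℕ) : ℝ) ^ 2) h fun m ↦ ?_
  rw [norm_div, norm_pow, Real.norm_eq_abs, norm_pow, Real.norm_eq_abs]
  push_cast
  rw [abs_of_pos (by positivity : (0 : ℝ) < m + 1)]
  gcongr
  exact pow_le_one₀ (abs_nonneg x) hx

theorem hasSum_one_sub_pow_sq_div_sq {r : ℝ} (hr : |r| ≤ 1) :
    HasSum (fun m : ℕ ↦ (1 - r ^ (m + 2)) ^ 2 / ((m + 1 : ℝ)) ^ 2)
      ((∑' m : ℕ, 1 / ((m + 1 : ℝ)) ^ 2) -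
          2 * r * (∑' m : ℕ, r ^ (m + 1) / ((m + 1 : ℝ)) ^ 2) +
          r ^ 2 * ∑' m : ℕ, (r ^ 2) ^ (m + 1) / ((m + 1 : ℝ)) ^ 2) := by
  have hr2 : |r ^ 2| ≤ 1 := by rw [abs_pow]; exact pow_le_one₀ (abs_nonneg r) hr
  have hζ := (summable_pow_succ_div_sq (x := 1) (by simp)).hasSum
  simp only [one_pow] at hζ
  have hexpand : (fun m : ℕ ↦ (1 - r ^ (m + 2)) ^ 2 / ((m + 1 : ℝ)) ^ 2) = fun m : ℕ ↦
      1 / ((m + 1 : ℝ)) ^ 2 - 2 * r * (r ^ (m + 1) / ((m + 1 : ℝ)) ^ 2) +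
        r ^ 2 * ((r ^ 2) ^ (m + 1) / ((m + 1 : ℝ)) ^ 2) := by
    funext m
    field_simp
    ring
  rw [hexpand]
  exact (hζ.sub ((summable_pow_succ_div_sq hr).hasSum.mul_left (2 * r))).add
    ((summable_pow_succ_div_sq hr2).hasSum.mul_left (r ^ 2))

theorem sum_sin_sq_bound_general (N : ℕ)
    (r : ℝ) (hr0 : 0 ≤ r) (hr1 : r < 1) :
    ∑ s ∈ Finset.Ico 1 N,
        (1 - r ^ (1 + min s (N - s))) ^ 2 / Real.sin (π * s / N) ^ 2 ≤
      ((N : ℝ) ^ 2 / 2) *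
        ((∑' m : ℕ, 1 / ((m + 1 : ℝ)) ^ 2) -
          2 * r * (∑' m : ℕ, r ^ (m + 1) / ((m + 1 : ℝ)) ^ 2) +
          r ^ 2 * ∑' m : ℕ, (r ^ 2) ^ (m + 1) / ((m + 1 : ℝ)) ^ 2) := by
  set a : ℕ → ℝ := fun m ↦ (1 - r ^ (1 + m)) ^ 2 / (m : ℝ) ^ 2
  have ha : ∀ m, 0 ≤ a m := fun m ↦ by positivity
  have hseries := hasSum_one_sub_pow_sq_div_sq (abs_le.mpr ⟨by linarith, hr1.le⟩)
  have hshift : (fun n ↦ a (n + 1)) = fun m : ℕ ↦ (1 - r ^ (m + 2)) ^ 2 / ((m + 1 : ℝ)) ^ 2 := by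
    funext m
    simp only [a]
    push_cast
    ring_nf
  rw [← hshift] at hseries
  calc ∑ s ∈ Ico 1 N, (1 - r ^ (1 + min s (N - s))) ^ 2 / sin (π * s / N) ^ 2
      ≤ ∑ s ∈ Ico 1 N, (N : ℝ) ^ 2 / 4 * a (min s (N - s)) := by
        refine sum_le_sum fun s hs ↦ ?_
        rw [mem_Ico] at hs
        exact sq_div_sin_pi_mul_div_sq_le _ hs.1 hs.2
    _ ≤ (N : ℝ) ^ 2 / 4 * (2 * ∑ s ∈ Ico 1 N, a s) := by
        rw [← mul_sum]
        gcongr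
        exact sum_Ico_comp_min_sub_le ha N
    _ ≤ (N : ℝ) ^ 2 / 4 * (2 * ∑' n, a (n + 1)) := by
        gcongr
        exact sum_Ico_one_le_tsum_succ ha hseries.summable N
    _ = _ := by rw [hseries.tsum_eq]; ring

/-- For even `N ≥ 2` and `r ∈ [0,1)`,
`∑_{s=1}^{N−1} (1 − r^{1+d(s,0)})²/sin²(πs/N) ≤ (N²/2)(ζ(2) − 2r Li₂(r) + r² Li₂(r²))`,
where `d(s,0) = min(s, N−s)`, `ζ(2) = ∑_{m≥1} 1/m²` and `Li₂(x) = ∑_{m≥1} x^m/m²`. -/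
theorem sum_sin_sq_bound (N : ℕ) (hN : Even N) (hN2 : 2 ≤ N)
    (r : ℝ) (hr0 : 0 ≤ r) (hr1 : r < 1) :
    ∑ s ∈ Finset.Ico 1 N,
        (1 - r ^ (1 + min s (N - s))) ^ 2 / Real.sin (π * s / N) ^ 2 ≤
      ((N : ℝ) ^ 2 / 2) *
        ((∑' m : ℕ, 1 / ((m + 1 : ℝ)) ^ 2) -
          2 * r * (∑' m : ℕ, r ^ (m + 1) / ((m + 1 : ℝ)) ^ 2) +
          r ^ 2 * ∑' m : ℕ, (r ^ 2) ^ (m + 1) / ((m + 1 : ℝ)) ^ 2) :=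
  sum_sin_sq_bound_general N r hr0 hr1
end

section
/- For every λ > 0 and P ∈ ℝ with λ² + P² ≠ 0: ∫₀^{2π} dθ / (λ − iP cos θ)² = 2πλ/(λ² + P²)^{3/2}. -/
open scoped Real

open Complex Metric

/-!
With `z = e^{iθ}` one has `2z (a + b cos θ) = b (z - A)(z - B)`, where `A, B` are the roots of
`b z² + 2a z + b`. Since `AB = 1`, exactly one root, `A`, lies inside the unit disc, so the integral
becomes a circle integral of `z / ((z - A)² (z - B)²)`, which Cauchy's formula for the derivative
evaluates at the double pole `A`. For `a = λ`, `b = -iP` the roots are `i(±√(λ² + P²) - λ)/P`.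
-/

theorem hasDerivAt_div_sub_sq {A B : ℂ} (h : A ≠ B) :
    HasDerivAt (fun z => z / (z - B) ^ 2) (-(A + B) / (A - B) ^ 3) A := by
  have hAB : A - B ≠ 0 := sub_ne_zero.mpr h
  refine ((hasDerivAt_id' A).div (((hasDerivAt_id' A).sub_const B).pow 2)
    (pow_ne_zero 2 hAB)).congr_deriv ?_
  simp only [Pi.pow_apply]
  field_simp
  ring

theorem circleIntegral_div_sub_sq_mul_sub_sq {A B : ℂ} (hA : ‖A‖ < 1) (hB : 1 < ‖B‖) :
    (∮ z in C(0, 1), z / ((z - A) ^ 2 * (z - B) ^ 2)) = -(2 * π * I) * (A + B) / (A - B) ^ 3 := by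
  have hsub : closedBall (0 : ℂ) 1 ⊆ {B}ᶜ := fun z hz hzB => by
    rw [mem_closedBall_zero_iff, Set.mem_singleton_iff.mp hzB] at hz
    exact hz.not_gt hB
  have hdiff : DifferentiableOn ℂ (fun z => z / (z - B) ^ 2) {B}ᶜ := fun z hz =>
    (differentiableAt_id.div ((differentiableAt_id.sub_const B).pow 2)
      (pow_ne_zero 2 (sub_ne_zero.mpr hz))).differentiableWithinAt
  have hAB : A ≠ B := fun h => (h ▸ hA).not_gt hB
  have cauchy := two_pi_I_inv_smul_circleIntegral_sub_sq_inv_smul_of_differentiable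
    isOpen_compl_singleton hsub hdiff (mem_ball_zero_iff.mpr hA)
  rw [(hasDerivAt_div_sub_sq hAB).deriv, inv_smul_eq_iff₀ two_pi_I_ne_zero] at cauchy
  simp only [smul_eq_mul] at cauchy
  calc (∮ z in C(0, 1), z / ((z - A) ^ 2 * (z - B) ^ 2))
      = ∮ z in C(0, 1), ((z - A) ^ 2)⁻¹ * (z / (z - B) ^ 2) := by
        congr 1; funext z; simp only [div_eq_mul_inv, mul_inv]; ring
    _ = _ := by rw [cauchy]; ring

theorem ofReal_cos_mul_two_circleMap (θ : ℝ) :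
    (Real.cos θ : ℂ) * (2 * circleMap 0 1 θ) = circleMap 0 1 θ ^ 2 + 1 := by
  rw [ofReal_cos, cos, circleMap_zero, ofReal_one, one_mul, neg_mul, exp_neg]
  field_simp

theorem integral_inv_add_mul_cos_sq_eq_circleIntegral {a b A B : ℂ}
    (hsum : b * (A + B) = -2 * a) (hprod : A * B = 1) :
    ∫ θ in (0 : ℝ)..2 * π, 1 / (a + b * Real.cos θ) ^ 2 =
      ∮ z in C(0, 1), -4 * I / b ^ 2 * (z / ((z - A) ^ 2 * (z - B) ^ 2)) := by
  refine intervalIntegral.integral_congr fun θ _ => ?_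
  set z := circleMap 0 1 θ
  have h2z : 2 * z ≠ 0 := mul_ne_zero two_ne_zero (circleMap_ne_center one_ne_zero)
  have hfactor : (a + b * Real.cos θ) * (2 * z) = b * ((z - A) * (z - B)) := by
    linear_combination b * ofReal_cos_mul_two_circleMap θ + z * hsum - b * hprod
  have hinv : 1 / (a + b * Real.cos θ) ^ 2 = (2 * z) ^ 2 / (b * ((z - A) * (z - B))) ^ 2 := by
    rw [← hfactor, mul_pow (a + _), div_mul_eq_div_div_swap, div_self (pow_ne_zero 2 h2z)]
  simp only [deriv_circleMap, smul_eq_mul, hinv]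
  simp only [div_eq_mul_inv, mul_inv, mul_pow]
  linear_combination (4 * z ^ 2 * (b ^ 2)⁻¹ * ((z - A) ^ 2)⁻¹ * ((z - B) ^ 2)⁻¹) * I_sq

/-- The condition on `s` selects the branch of `√(a² - b²)`: `(s - a) / b` is the root of
`b z² + 2a z + b` inside the unit disc. -/
theorem integral_inv_add_mul_cos_sq {a b s : ℂ} (hb : b ≠ 0) (hs : s ^ 2 = a ^ 2 - b ^ 2)
    (hA : ‖(s - a) / b‖ < 1) :
    ∫ θ in (0 : ℝ)..2 * π, 1 / (a + b * Real.cos θ) ^ 2 = 2 * π * a / s ^ 3 := by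
  set A := (s - a) / b
  set B := (-s - a) / b
  have hsum : b * (A + B) = -2 * a := by simp only [A, B]; field_simp; ring
  have hprod : A * B = 1 := by simp only [A, B]; field_simp; linear_combination -hs
  have hB : 1 < ‖B‖ := by
    have hAB : ‖A‖ * ‖B‖ = 1 := by rw [← norm_mul, hprod, norm_one]
    nlinarith [norm_nonneg A]
  have hbAB : b * (A - B) = 2 * s := by simp only [A, B]; field_simp; ring
  have hs0 : s ≠ 0 := by
    rintro rfl
    have : A = B := sub_eq_zero.mp (by simpa [hb] using hbAB)
    exact hA.not_gt (this ▸ hB)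
  rw [integral_inv_add_mul_cos_sq_eq_circleIntegral hsum hprod, circleIntegral.integral_const_mul,
    circleIntegral_div_sub_sq_mul_sub_sq hA hB]
  have hAB : A - B = 2 * s / b := by rw [eq_div_iff hb, mul_comm, hbAB]
  have hApB : A + B = -2 * a / b := by rw [eq_div_iff hb, mul_comm, hsum]
  rw [hAB, hApB]
  field_simp
  linear_combination (-4 * a) * I_sq

theorem sqrt_sq_add_sq_sub_lt_abs {x y : ℝ} (hx : 0 < x) (hy : y ≠ 0) :
    √(x ^ 2 + y ^ 2) - x < |y| := by
  rw [sub_lt_iff_lt_add', Real.sqrt_lt' (by positivity)]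
  nlinarith [sq_abs y, abs_pos.mpr hy]

theorem rpow_three_div_two_eq_sqrt_pow {x : ℝ} (hx : 0 ≤ x) : x ^ (3 / 2 : ℝ) = √x ^ 3 := by
  rw [Real.sqrt_eq_rpow, ← Real.rpow_mul_natCast hx]
  norm_num

theorem integral_inv_sq_sub_cos_general (lam P : ℝ) (hlam : 0 < lam) :
    ∫ θ in (0:ℝ)..(2 * π),
        1 / ((lam : ℂ) - Complex.I * (P : ℂ) * Real.cos θ) ^ 2 =
      ((2 * π * lam / (lam ^ 2 + P ^ 2) ^ ((3 : ℝ) / 2) : ℝ) : ℂ) := by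
  rw [rpow_three_div_two_eq_sqrt_pow (by positivity)]
  rcases eq_or_ne P 0 with rfl | hP
  · simp only [ofReal_zero, mul_zero, zero_mul, sub_zero, intervalIntegral.integral_const,
      real_smul, zero_pow two_ne_zero, add_zero, Real.sqrt_sq hlam.le]
    push_cast
    field_simp
  · have hs : ((√(lam ^ 2 + P ^ 2) : ℝ) : ℂ) ^ 2 = (lam : ℂ) ^ 2 - (-I * P) ^ 2 := by
      rw [← ofReal_pow, Real.sq_sqrt (by positivity)]
      push_cast
      linear_combination (P : ℂ) ^ 2 * I_sq
    have hA : ‖((√(lam ^ 2 + P ^ 2) : ℝ) - lam : ℂ) / (-I * P)‖ < 1 := by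
      rw [norm_div, norm_mul, norm_neg, norm_I, one_mul, ← ofReal_sub, norm_real, norm_real,
        Real.norm_eq_abs, Real.norm_eq_abs, div_lt_one (abs_pos.mpr hP), abs_of_nonneg]
      · exact sqrt_sq_add_sq_sub_lt_abs hlam hP
      · exact sub_nonneg.mpr (Real.le_sqrt_of_sq_le (le_add_of_nonneg_right (sq_nonneg P)))
    have := integral_inv_add_mul_cos_sq (by simpa using hP) hs hA
    push_cast at this ⊢
    simpa only [neg_mul, ← sub_eq_add_neg] using this

/-- For `λ > 0` and `P ∈ ℝ` with `λ² + P² ≠ 0`,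
`∫₀^{2π} dθ/(λ − iP cos θ)² = 2πλ/(λ² + P²)^{3/2}`. -/
theorem integral_inv_sq_sub_cos (lam P : ℝ) (hlam : 0 < lam) (h : lam ^ 2 + P ^ 2 ≠ 0) :
    ∫ θ in (0:ℝ)..(2 * π),
        1 / ((lam : ℂ) - Complex.I * (P : ℂ) * Real.cos θ) ^ 2 =
      ((2 * π * lam / (lam ^ 2 + P ^ 2) ^ ((3 : ℝ) / 2) : ℝ) : ℂ) :=
  integral_inv_sq_sub_cos_general lam P hlam
end
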